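/- arXiv:2203.12977 — 4 statements merged into one kernel-verified Lean document; each statement's English description precedes it below -/
import Mathlib

section
/- Let k be a field and f : A → B a surjective homomorphism of finite-dimensional (associative, unital) k-algebras. Then the induced map on groups of units A^× → B^× is surjective; i.e., for every x ∈ A with f(x) invertible in B, there exists z ∈ ker(f) such that x + z is invertible in A. -/
/-!
Let `X ^ m * p` with `p(0) ≠ 0` be the minimal polynomial of `x`, and take `z = p(x)`.
Since `f x` is a unit, `(f x) ^ m * p(f x) = 0` forces `f z = p(f x) = 0`. On the other hand
`X + p` is coprime to `X ^ m` (as `p(0) ≠ 0`) and to `p` (as `X + p ≡ X` mod `p`), so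
`x + z = (X + p)(x)` is invertible in `k[x] ⊆ A`.
-/

open Polynomial

namespace Polynomial

theorem isUnit_aeval_of_isCoprime {R A : Type*} [CommSemiring R] [Semiring A] [Algebra R A]
    {x : A} {p q : R[X]} (hpq : IsCoprime p q) (hq : aeval x q = 0) : IsUnit (aeval x p) := by
  obtain ⟨a, b, hab⟩ := hpq
  have hinv : aeval x (a * p) = 1 := by simpa [hq] using congrArg (aeval x) hab
  exact isUnit_iff_exists.2 ⟨aeval x a, by rwa [← map_mul, mul_comm], by rwa [← map_mul]⟩

theorem aeval_eq_zero_of_aeval_X_pow_mul_eq_zero {R A : Type*} [CommSemiring R] [Semiring A]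
    [Algebra R A] {y : A} (hy : IsUnit y) {m : ℕ} {p : R[X]} (h : aeval y (X ^ m * p) = 0) :
    aeval y p = 0 := by
  rw [map_mul, map_pow, aeval_X] at h
  exact (hy.pow m).mul_right_eq_zero.1 h

theorem isCoprime_X_add_X_pow_mul {k : Type*} [Field k] {p : k[X]} (hp : ¬X ∣ p) (m : ℕ) :
    IsCoprime (X + p) (X ^ m * p) := by
  have hXp : IsCoprime X p := prime_X.coprime_iff_not_dvd.2 hp
  have hX : IsCoprime (X + p) X := by simpa [add_comm] using hXp.symm.add_mul_left_left 1
  exact hX.pow_right.mul_right (by simpa using hXp.add_mul_left_left 1)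

end Polynomial

theorem IsIntegral.exists_aeval_X_pow_mul_eq_zero_and_isUnit_add {k A : Type*} [Field k] [Ring A]
    [Algebra k A] {x : A} (hx : IsIntegral k x) :
    ∃ (m : ℕ) (p : k[X]), aeval x (X ^ m * p) = 0 ∧ IsUnit (x + aeval x p) := by
  obtain ⟨p, hp, hXp⟩ := exists_eq_pow_rootMultiplicity_mul_and_not_dvd _ (minpoly.ne_zero hx) 0
  rw [map_zero, sub_zero] at hp hXp
  have hroot : aeval x (X ^ rootMultiplicity 0 (minpoly k x) * p) = 0 := by
    rw [← hp, minpoly.aeval]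
  refine ⟨_, p, hroot, ?_⟩
  simpa using isUnit_aeval_of_isCoprime (isCoprime_X_add_X_pow_mul hXp _) hroot

theorem stmt0_general {k A B : Type*} [Field k] [Ring A] [Ring B] [Algebra k A] [Algebra k B]
    [FiniteDimensional k A]
    (f : A →ₐ[k] B)
    (x : A) (hx : IsUnit (f x)) :
    ∃ z : A, f z = 0 ∧ IsUnit (x + z) := by
  obtain ⟨m, p, hroot, hunit⟩ :=
    (Algebra.IsIntegral.isIntegral (R := k) x).exists_aeval_X_pow_mul_eq_zero_and_isUnit_add
  refine ⟨aeval x p, ?_, hunit⟩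
  rw [← aeval_algHom_apply]
  exact aeval_eq_zero_of_aeval_X_pow_mul_eq_zero hx (by rw [aeval_algHom_apply, hroot, map_zero])

theorem stmt0 {k A B : Type*} [Field k] [Ring A] [Ring B] [Algebra k A] [Algebra k B]
    [FiniteDimensional k A] [FiniteDimensional k B]
    (f : A →ₐ[k] B) (hf : Function.Surjective f)
    (x : A) (hx : IsUnit (f x)) :
    ∃ z : A, f z = 0 ∧ IsUnit (x + z) :=
  stmt0_general f x hx
end

section
/- For every ε > 0 there exists a bijection f : ℚ → ℚ \ {0} such that x ≤ f(x) ≤ x + ε for all x ∈ ℚ. -/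
theorem stmt5 (ε : ℚ) (hε : 0 < ε) :
    ∃ f : ℚ → ℚ, Set.BijOn f Set.univ {q : ℚ | q ≠ 0} ∧
      ∀ x : ℚ, x ≤ f x ∧ f x ≤ x + ε := by
  classical
  set S : Set ℚ := {x | ∃ n : ℕ, x = n * ε} with hS
  refine ⟨fun x => if x ∈ S then x + ε else x, ⟨?_, ?_, ?_⟩, ?_⟩
  · intro x _
    simp only [Set.mem_setOf_eq]
    by_cases hx : x ∈ S
    · simp only [hx, if_pos]
      obtain ⟨n, rfl⟩ := hx
      have : (0:ℚ) ≤ n * ε := by positivity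
      linarith
    · simp only [hx, if_neg, not_false_iff]
      intro h
      exact hx ⟨0, by simp [h]⟩
  · intro a _ b _ hab
    simp only at hab
    by_cases ha : a ∈ S <;> by_cases hb : b ∈ S <;>
      simp only [ha, hb, if_pos, if_neg, not_false_iff] at hab
    · linarith
    · exfalso; apply hb
      obtain ⟨n, rfl⟩ := ha
      exact ⟨n + 1, by push_cast; linarith⟩
    · exfalso; apply ha
      obtain ⟨n, rfl⟩ := hb
      exact ⟨n + 1, by push_cast; linarith⟩
    · exact hab
  · intro q hq
    simp only [Set.mem_setOf_eq] at hq
    by_cases hqS : q ∈ S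
    · obtain ⟨n, rfl⟩ := hqS
      obtain ⟨m, rfl⟩ : ∃ m : ℕ, n = m + 1 := by
        cases n with
        | zero => simp at hq
        | succ m => exact ⟨m, rfl⟩
      refine ⟨(m : ℚ) * ε, Set.mem_univ _, ?_⟩
      have hm : (m : ℚ) * ε ∈ S := ⟨m, rfl⟩
      simp only [hm, if_pos]
      push_cast; ring
    · exact ⟨q, Set.mem_univ _, by simp [hqS]⟩
  · intro x
    by_cases hx : x ∈ S <;> simp only [hx, if_pos, if_neg, not_false_iff] <;>
      constructor <;> linarith
end

section
/- Let V be a closed subset of ℝ^n containing 0, H a hyperplane through 0 with unit normal n_H, and assume the paratingent cone C^+(0,V) is contained in H. Then there exists r > 0 such that for every x ∈ H, the set V ∩ B(0,r) ∩ (x + ℝ·n_H) contains at most one point. -/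
open Filter

/-- The paratingent cone of `V` at `x`. -/
def paratingentCone {E : Type*} [NormedAddCommGroup E] [NormedSpace ℝ E]
    (V : Set E) (x : E) : Set E :=
  {v | ∃ (xs ys : ℕ → E) (c : ℕ → ℝ),
    (∀ n, xs n ∈ V) ∧ (∀ n, ys n ∈ V) ∧
    Tendsto xs atTop (nhds x) ∧ Tendsto ys atTop (nhds x) ∧
    Tendsto c atTop atTop ∧
    Tendsto (fun n => c n • (xs n - ys n)) atTop (nhds v)}

/-! If `V` meets some line in direction `v` in two points arbitrarily close to `x`, then rescaling
the differences of these pairs to unit multiples of `v` shows that `v` lies in the paratingent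
cone. Hence a direction outside the cone meets `V` at most once near `x` along every line. -/

open Topology

section

variable {E : Type*} [NormedAddCommGroup E] [NormedSpace ℝ E]

theorem mem_paratingentCone_of_sub_eq_pos_smul {V : Set E} {x v : E} {p q : ℕ → E}
    {t : ℕ → ℝ} (hp : ∀ k, p k ∈ V) (hq : ∀ k, q k ∈ V)
    (hpx : Tendsto p atTop (𝓝 x)) (hqx : Tendsto q atTop (𝓝 x)) (ht : ∀ k, 0 < t k)
    (hv : v ≠ 0) (hpq : ∀ k, p k - q k = t k • v) : v ∈ paratingentCone V x := by
  have ht_eq : t = fun k => ‖p k - q k‖ / ‖v‖ := funext fun k => by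
    rw [hpq, norm_smul, Real.norm_of_nonneg (ht k).le,
      mul_div_cancel_right₀ _ (norm_ne_zero_iff.2 hv)]
  have ht0 : Tendsto t atTop (𝓝[>] 0) := by
    refine tendsto_nhdsWithin_iff.2 ⟨?_, Eventually.of_forall ht⟩
    have := ((hpx.sub hqx).norm.div_const ‖v‖)
    rwa [sub_self, norm_zero, zero_div, ← ht_eq] at this
  refine ⟨p, q, fun k => (t k)⁻¹, hp, hq, hpx, hqx, tendsto_inv_nhdsGT_zero.comp ht0, ?_⟩
  refine tendsto_const_nhds.congr fun k => ?_
  rw [hpq, smul_smul, inv_mul_cancel₀ (ht k).ne', one_smul]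

theorem exists_sub_eq_pos_smul_of_nontrivial_inter_line {S : Set E} {y v : E}
    (h : (S ∩ {z | ∃ t : ℝ, z = y + t • v}).Nontrivial) :
    ∃ p ∈ S, ∃ q ∈ S, ∃ t : ℝ, 0 < t ∧ p - q = t • v := by
  obtain ⟨a, ⟨haS, s, rfl⟩, b, ⟨hbS, u, rfl⟩, hab⟩ := h
  have hsu : s ≠ u := fun h => hab (by rw [h])
  rcases hsu.lt_or_gt with h | h
  · exact ⟨_, hbS, _, haS, u - s, sub_pos.2 h, by module⟩
  · exact ⟨_, haS, _, hbS, s - u, sub_pos.2 h, by module⟩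

theorem exists_pos_subsingleton_inter_line_of_notMem_paratingentCone {V : Set E}
    {x v : E} (hv : v ∉ paratingentCone V x) :
    ∃ r > (0 : ℝ), ∀ y : E,
      (V ∩ Metric.ball x r ∩ {z | ∃ t : ℝ, z = y + t • v}).Subsingleton := by
  rcases eq_or_ne v 0 with rfl | hv0
  · refine ⟨1, one_pos, fun y => (Set.subsingleton_singleton (a := y)).anti ?_⟩
    rintro z ⟨-, t, rfl⟩
    simp
  by_contra! h
  have hpair : ∀ k : ℕ, ∃ p ∈ V ∩ Metric.ball x (1 / (k + 1)),
      ∃ q ∈ V ∩ Metric.ball x (1 / (k + 1)), ∃ t : ℝ, 0 < t ∧ p - q = t • v :=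
    fun k => by
      obtain ⟨_, hy⟩ := h (1 / (k + 1)) (by positivity)
      exact exists_sub_eq_pos_smul_of_nontrivial_inter_line hy
  choose p hp q hq t ht hpq using hpair
  have hball {s : ℕ → E} (hs : ∀ k : ℕ, s k ∈ Metric.ball x (1 / ((k : ℝ) + 1))) :
      Tendsto s atTop (𝓝 x) :=
    tendsto_iff_dist_tendsto_zero.2 <| squeeze_zero (fun _ => dist_nonneg)
      (fun k => (hs k).le) tendsto_one_div_add_atTop_nhds_zero_nat
  exact hv <| mem_paratingentCone_of_sub_eq_pos_smul (fun k => (hp k).1)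
    (fun k => (hq k).1) (hball fun k => (hp k).2) (hball fun k => (hq k).2) ht hv0 hpq

end

theorem stmt10_general {n : ℕ} (V : Set (EuclideanSpace ℝ (Fin n)))
    (nH : EuclideanSpace ℝ (Fin n)) (hnH : ‖nH‖ = 1)
    (hcone : paratingentCone V 0 ⊆ {y | inner ℝ nH y = (0 : ℝ)}) :
    ∃ r > (0 : ℝ), ∀ x : EuclideanSpace ℝ (Fin n), inner ℝ nH x = (0 : ℝ) →
      Set.Subsingleton (V ∩ Metric.ball 0 r ∩ {y | ∃ t : ℝ, y = x + t • nH}) := by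
  have hnotMem : nH ∉ paratingentCone V 0 := fun h => by
    have : inner ℝ nH nH = (0 : ℝ) := hcone h
    rw [real_inner_self_eq_norm_sq, hnH] at this
    norm_num at this
  obtain ⟨r, hr, hline⟩ := exists_pos_subsingleton_inter_line_of_notMem_paratingentCone hnotMem
  exact ⟨r, hr, fun x _ => hline x⟩

theorem stmt10 {n : ℕ} (V : Set (EuclideanSpace ℝ (Fin n))) (hV : IsClosed V)
    (h0 : (0 : EuclideanSpace ℝ (Fin n)) ∈ V)
    (nH : EuclideanSpace ℝ (Fin n)) (hnH : ‖nH‖ = 1)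
    (hcone : paratingentCone V 0 ⊆ {y | inner ℝ nH y = (0 : ℝ)}) :
    ∃ r > (0 : ℝ), ∀ x : EuclideanSpace ℝ (Fin n), inner ℝ nH x = (0 : ℝ) →
      Set.Subsingleton (V ∩ Metric.ball 0 r ∩ {y | ∃ t : ℝ, y = x + t • nH}) :=
  stmt10_general V nH hnH hcone
end

section
/- Let Γ be a closed subset of the closed unit ball of a finite-dimensional normed space E with 0 ∈ Γ, and let f : Γ → ℝ be continuous with f(0) = 0 and f(x)/‖x‖ → 0 as x → 0 in Γ. Then f extends to a continuous function F on the closed unit ball with F(0)=0 and F(x)/‖x‖ → 0 as x → 0; in particular the Gâteaux derivative of F at 0 is 0. -/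
theorem stmt12 {E : Type*} [NormedAddCommGroup E] [NormedSpace ℝ E]
    [FiniteDimensional ℝ E]
    (Γ : Set E) (hΓc : IsClosed Γ) (hΓsub : Γ ⊆ Metric.closedBall 0 1)
    (h0 : (0 : E) ∈ Γ)
    (f : E → ℝ) (hf : ContinuousOn f Γ) (hf0 : f 0 = 0)
    (hlim : ∀ ε > (0 : ℝ), ∃ δ > (0 : ℝ), ∀ x ∈ Γ, ‖x‖ < δ → |f x| ≤ ε * ‖x‖) :
    ∃ F : E → ℝ, ContinuousOn F (Metric.closedBall 0 1) ∧
      (∀ x ∈ Γ, F x = f x) ∧ F 0 = 0 ∧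
      ∀ ε > (0 : ℝ), ∃ δ > (0 : ℝ), ∀ x ∈ Metric.closedBall (0 : E) 1,
        ‖x‖ < δ → |F x| ≤ ε * ‖x‖ := by
  set g : E → ℝ := fun x => f x / ‖x‖ with hgdef
  have hg0 : g 0 = 0 := by simp [hgdef, hf0]
  have hgΓ : ContinuousOn g Γ := by
    intro x hx
    by_cases hx0 : x = 0
    · subst hx0
      rw [Metric.continuousWithinAt_iff]
      intro ε hε
      obtain ⟨δ, hδ, hδ'⟩ := hlim (ε / 2) (by linarith)
      refine ⟨δ, hδ, fun y hy hyd => ?_⟩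
      rw [dist_zero_right] at hyd
      have : |g y - g 0| ≤ ε / 2 := by
        rw [hg0, sub_zero]
        by_cases hy0 : y = 0
        · simp [hgdef, hy0, hf0]; positivity
        · have hny : (0 : ℝ) < ‖y‖ := norm_pos_iff.mpr hy0
          have := hδ' y hy hyd
          rw [hgdef]
          simp only [abs_div, abs_norm]
          rw [div_le_iff₀ hny]
          exact this
      calc dist (g y) (g 0) = |g y - g 0| := rfl
        _ ≤ ε / 2 := this
        _ < ε := by linarith
    · exact (hf x hx).div continuous_norm.continuousWithinAt
        (norm_ne_zero_iff.mpr hx0)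
  obtain ⟨G, hG⟩ := ContinuousMap.exists_restrict_eq (Y := ℝ) hΓc
    ⟨_, continuousOn_iff_continuous_restrict.mp hgΓ⟩
  have hGe : ∀ x ∈ Γ, G x = g x := fun x hx => ContinuousMap.congr_fun hG ⟨x, hx⟩
  have hG0 : G 0 = 0 := by rw [hGe 0 h0, hg0]
  refine ⟨fun x => G x * ‖x‖, (G.continuous.mul continuous_norm).continuousOn,
    fun x hx => ?_, by simp, fun ε hε => ?_⟩
  · show G x * ‖x‖ = f x
    rw [hGe x hx]
    by_cases hx0 : x = 0
    · simp [hx0, hf0]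
    · rw [hgdef]
      exact div_mul_cancel₀ _ (norm_ne_zero_iff.mpr hx0)
  · have := Metric.continuous_iff.mp G.continuous 0 ε hε
    obtain ⟨δ, hδ, hδ'⟩ := this
    refine ⟨δ, hδ, fun x _ hxδ => ?_⟩
    show |G x * ‖x‖| ≤ ε * ‖x‖
    have hGx : |G x| ≤ ε := by
      have := hδ' x (by rwa [dist_zero_right])
      rw [dist_eq_norm, hG0, sub_zero] at this
      exact le_of_lt this
    calc |G x * ‖x‖| = |G x| * ‖x‖ := by rw [abs_mul, abs_norm]
      _ ≤ ε * ‖x‖ := mul_le_mul_of_nonneg_right hGx (norm_nonneg x)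
end
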